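/- arXiv:1412.6020 — 2 statements merged into one kernel-verified Lean document; each statement's English description precedes it below -/
import Mathlib

section
/- Let X be a random variable with values in a measurable space 𝒳, and let b_{K1},…,b_{KK} : 𝒳 → ℝ be measurable functions with Gram matrix G = E[b^K(X) b^K(X)'] positive definite, where b^K(x) = (b_{K1}(x),…,b_{KK}(x))'. Suppose there is a constant c_K > 0 such that (i) sup_{x ∈ 𝒳} Σ_{k=1}^K |b_{Kk}(x)| ≤ c₁ c_K, and (ii) max_{1≤k≤K} E[|b_{Kk}(X)|] ≤ c₂ c_K^{-1}, for positive constants c₁, c₂. Then the L∞ operator norm of the L²(X) orthogonal projection P_K onto the span of b_{K1},…,b_{KK}, defined by P_K f(x) = b^K(x)' G^{-1} E[b^K(X) f(X)], satisfies ‖P_K f‖_∞ ≤ c₁ c₂ ‖G^{-1}‖_{ℓ∞} ‖f‖_∞ for every bounded measurable f, where ‖G^{-1}‖_{ℓ∞} is the maximum row sum of absolute values of G^{-1}. -/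
/-!
Both factors of `P_K f(x) = b^K(x)' G⁻¹ E[b^K(X) f(X)]` are controlled by an `ℓ¹`–`ℓ∞` duality.
Each coordinate of `E[b^K(X) f(X)]` is at most `E|b_{Kl}(X)| ‖f‖_∞ ≤ c₂ c_K⁻¹ ‖f‖_∞`; applying `G⁻¹`
multiplies this uniform bound by its maximal absolute row sum; pairing with `b^K(x)` multiplies it
by `Σ_k |b_{Kk}(x)| ≤ c₁ c_K`, and the two powers of `c_K` cancel.
-/

open MeasureTheory Matrix

theorem abs_dotProduct_le_sum_abs_mul {n : Type*} [Fintype n] {u v : n → ℝ} {B : ℝ}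
    (hv : ∀ k, |v k| ≤ B) : |u ⬝ᵥ v| ≤ (∑ k, |u k|) * B :=
  calc |u ⬝ᵥ v| ≤ ∑ k, |u k * v k| := Finset.abs_sum_le_sum_abs _ _
    _ ≤ ∑ k, |u k| * B := Finset.sum_le_sum fun k _ => by
        rw [abs_mul]; exact mul_le_mul_of_nonneg_left (hv k) (abs_nonneg _)
    _ = (∑ k, |u k|) * B := (Finset.sum_mul _ _ _).symm

theorem abs_integral_mul_le_integral_abs_mul {α : Type*} [MeasurableSpace α] {μ : Measure α}
    {g f : α → ℝ} {F : ℝ} (hg : Integrable g μ) (hf : ∀ x, |f x| ≤ F) :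
    |∫ x, g x * f x ∂μ| ≤ (∫ x, |g x| ∂μ) * F :=
  calc |∫ x, g x * f x ∂μ| ≤ ∫ x, |g x| * F ∂μ :=
        norm_integral_le_of_norm_le (hg.abs.mul_const F) (ae_of_all _ fun x => by
          rw [Real.norm_eq_abs, abs_mul]; exact mul_le_mul_of_nonneg_left (hf x) (abs_nonneg _))
    _ = (∫ x, |g x| ∂μ) * F := integral_mul_const F _

theorem projection_sup_norm_bound_general
    {𝒳 : Type*} [MeasurableSpace 𝒳] (μ : Measure 𝒳) [IsProbabilityMeasure μ]
    {K : ℕ} (b : Fin K → 𝒳 → ℝ) (hbmeas : ∀ k, Measurable (b k))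
    (G : Matrix (Fin K) (Fin K) ℝ)
    (cK c₁ c₂ : ℝ) (hcK : 0 < cK) (hc₂ : 0 < c₂)
    (hsum : ∀ x, ∑ k : Fin K, |b k x| ≤ c₁ * cK)
    (hL1 : ∀ k, (∫ x, |b k x| ∂μ) ≤ c₂ / cK)
    (f : 𝒳 → ℝ)
    (hfbdd : BddAbove (Set.range fun x => |f x|)) :
    (⨆ x : 𝒳, |(fun k => b k x) ⬝ᵥ G⁻¹.mulVec (fun l => ∫ y, b l y * f y ∂μ)|) ≤
      c₁ * c₂ * (⨆ i : Fin K, ∑ j : Fin K, |G⁻¹ i j|) * (⨆ x : 𝒳, |f x|) := by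
  have : Nonempty 𝒳 := nonempty_of_isProbabilityMeasure μ
  set F := ⨆ x : 𝒳, |f x|
  set M := ⨆ i : Fin K, ∑ j : Fin K, |G⁻¹ i j|
  have hF : ∀ y, |f y| ≤ F := le_ciSup hfbdd
  have hF₀ : 0 ≤ F := Real.iSup_nonneg fun x => abs_nonneg (f x)
  have hM : ∀ i, ∑ j, |G⁻¹ i j| ≤ M := le_ciSup (Set.finite_range _).bddAbove
  have hM₀ : 0 ≤ M := Real.iSup_nonneg fun i => Finset.sum_nonneg fun j _ => abs_nonneg _
  have hb_int : ∀ l, Integrable (b l) μ := fun l =>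
    .of_bound (hbmeas l).aestronglyMeasurable (c₁ * cK) (ae_of_all _ fun x =>
      (Finset.single_le_sum (fun k _ => abs_nonneg (b k x)) (Finset.mem_univ l)).trans (hsum x))
  have hv : ∀ l, |∫ y, b l y * f y ∂μ| ≤ c₂ / cK * F := fun l =>
    (abs_integral_mul_le_integral_abs_mul (hb_int l) hF).trans
      (mul_le_mul_of_nonneg_right (hL1 l) hF₀)
  have hGv : ∀ i, |(G⁻¹ *ᵥ fun l => ∫ y, b l y * f y ∂μ) i| ≤ M * (c₂ / cK * F) := fun i =>
    (abs_dotProduct_le_sum_abs_mul hv).trans (mul_le_mul_of_nonneg_right (hM i) (by positivity))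
  refine ciSup_le fun x => ?_
  calc _ ≤ (∑ k, |b k x|) * (M * (c₂ / cK * F)) := abs_dotProduct_le_sum_abs_mul hGv
    _ ≤ c₁ * cK * (M * (c₂ / cK * F)) := mul_le_mul_of_nonneg_right (hsum x) (by positivity)
    _ = c₁ * c₂ * M * F := by field_simp

/-- **Sup-norm bound for the L² projection via the ℓ∞ norm of the inverse Gram matrix.**
If `sup_x Σ_k |b_k(x)| ≤ c₁ c_K` and `max_k E[|b_k(X)|] ≤ c₂ / c_K`, then the `L²(X)`
orthogonal projection `P_K f(x) = b^K(x)' G⁻¹ E[b^K(X) f(X)]` satisfies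
`‖P_K f‖_∞ ≤ c₁ c₂ ‖G⁻¹‖_{ℓ∞} ‖f‖_∞` for every bounded measurable `f`. -/
theorem projection_sup_norm_bound
    {𝒳 : Type*} [MeasurableSpace 𝒳] [Nonempty 𝒳] (μ : Measure 𝒳) [IsProbabilityMeasure μ]
    {K : ℕ} (hK : 0 < K) (b : Fin K → 𝒳 → ℝ) (hbmeas : ∀ k, Measurable (b k))
    (G : Matrix (Fin K) (Fin K) ℝ)
    (hGdef : ∀ j k : Fin K, G j k = ∫ x, b j x * b k x ∂μ)
    (hG : G.PosDef)
    (cK c₁ c₂ : ℝ) (hcK : 0 < cK) (hc₁ : 0 < c₁) (hc₂ : 0 < c₂)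
    (hsum : ∀ x, ∑ k : Fin K, |b k x| ≤ c₁ * cK)
    (hL1 : ∀ k, (∫ x, |b k x| ∂μ) ≤ c₂ / cK)
    (f : 𝒳 → ℝ) (hfmeas : Measurable f)
    (hfbdd : BddAbove (Set.range fun x => |f x|))
    (hint : ∀ l, Integrable (fun y => b l y * f y) μ) :
    (⨆ x : 𝒳, |(fun k => b k x) ⬝ᵥ G⁻¹.mulVec (fun l => ∫ y, b l y * f y ∂μ)|) ≤
      c₁ * c₂ * (⨆ i : Fin K, ∑ j : Fin K, |G⁻¹ i j|) * (⨆ x : 𝒳, |f x|) :=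
  projection_sup_norm_bound_general μ b hbmeas G cK c₁ c₂ hcK hc₂ hsum hL1 f hfbdd
end

section
/- Under the hypotheses of the β-mixing matrix exponential inequality (mean-zero matrix-valued functions Ξ_{i,n} = Ξ_n(X_i) of a β-mixing sequence with ‖Ξ_{i,n}‖ ≤ R_n and cross-moment bound s_n²), if q = q(n) ≤ n/2 is chosen so that (n/q)β(q) = o(1) and R_n √(q log(d₁+d₂)) = o(s_n √n), then ‖Σ_{i=1}^n Ξ_{i,n}‖ = O_p( s_n √(n q log(d₁+d₂)) ). -/
/-!
Fix `k` and work at the level `t = 2√(k+1) · s √(n q log d)`, so that `6t = C s √(n q log d)`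
with `C = 12√(k+1)`. Eventually `q R < t`, so the remainder block (fewer than `q` terms of norm
at most `R`) never reaches `t` and its probability vanishes; and `R t ≤ 3 n s²`, so the Bernstein
denominator is at most `2 n q s²` and the exponential term is at most
`2d · exp(-(k+1) log d) ≤ 2 · 2⁻ᵏ`. Choosing `k` with `2 · 2⁻ᵏ < ε/2` and `n` so large that the
mixing term is below `ε/2` bounds the tail probability by `ε` for all large `n`.
-/

open MeasureTheory Matrix Filter
open scoped Matrix.Norms.L2Operator Asymptotics

section

open Finset Real

theorem Fin.card_filter_le_val (n m : ℕ) : #{i : Fin n | m ≤ i.val} = n - m := by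
  rw [← card_map Fin.valEmbedding, ← Nat.card_Ico]
  congr 1
  ext j
  simp only [Finset.mem_map, Finset.mem_filter, mem_univ, true_and, Fin.valEmbedding_apply,
    mem_Ico]
  exact ⟨by rintro ⟨i, hi, rfl⟩; exact ⟨hi, i.isLt⟩, fun h => ⟨⟨j, h.2⟩, h.1, rfl⟩⟩

theorem card_remainder_block_lt {n q : ℕ} (hq : 0 < q) :
    #{i : Fin n | q * (n / q) ≤ i.val} < q := by
  rw [Fin.card_filter_le_val, ← Nat.mod_eq_sub_mul_div]
  exact Nat.mod_lt _ hq

theorem norm_sum_lt_of_card_mul_lt {ι E : Type*} [SeminormedAddCommGroup E] {s : Finset ι}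
    {f : ι → E} {R t : ℝ} (hf : ∀ i ∈ s, ‖f i‖ ≤ R) (h : #s * R < t) :
    ‖∑ i ∈ s, f i‖ < t :=
  (norm_sum_le_of_le s hf).trans_lt (by rwa [sum_const, nsmul_eq_mul])

theorem measure_remainder_block_eq_zero {Ω E : Type*} [MeasurableSpace Ω]
    [SeminormedAddCommGroup E] (μ : Measure Ω) {n q : ℕ} (hq : 0 < q)
    (f : Fin n → Ω → E) {R t : ℝ} (hR : 0 ≤ R) (hf : ∀ i ω, ‖f i ω‖ ≤ R) (ht : q * R < t) :
    μ {ω | t ≤ ‖∑ i ∈ univ.filter (fun i : Fin n => q * (n / q) ≤ i.val), f i ω‖} = 0 := by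
  have hcard : (#{i : Fin n | q * (n / q) ≤ i.val} : ℝ) * R < t :=
    lt_of_le_of_lt (mul_le_mul_of_nonneg_right
      (by exact_mod_cast (card_remainder_block_lt hq).le) hR) ht
  have hempty : {ω | t ≤ ‖∑ i ∈ univ.filter (fun i : Fin n => q * (n / q) ≤ i.val), f i ω‖}
      = ∅ :=
    Set.eq_empty_of_forall_notMem fun ω hω =>
      (not_le.2 (norm_sum_lt_of_card_mul_lt (fun i _ => hf i ω) hcard)) hω
  rw [hempty, measure_empty]

theorem bernstein_exponent_le {v b t : ℝ} (hv : 0 < v) (hb : 0 ≤ b) (hbv : b ≤ 3 * v) :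
    -(t ^ 2 / 2) / (v + b / 3) ≤ -(t ^ 2 / (4 * v)) := by
  rw [neg_div, neg_le_neg_iff, show t ^ 2 / (4 * v) = t ^ 2 / 2 / (2 * v) by ring]
  exact div_le_div_of_nonneg_left (by positivity) (by positivity) (by linarith)

theorem mul_exp_neg_succ_mul_log_le {d : ℝ} (hd : 2 ≤ d) (k : ℕ) :
    d * exp (-((k + 1) * log d)) ≤ (1 / 2) ^ k := by
  have hd0 : 0 < d := by linarith
  have hexp : exp (-((k + 1) * log d)) = (d ^ (k + 1))⁻¹ := by
    rw [exp_neg, ← Nat.cast_succ, exp_nat_mul, exp_log hd0]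
  calc d * exp (-((k + 1) * log d)) = (1 / d) ^ k := by
        rw [hexp, pow_succ, div_pow, one_pow]; field_simp
    _ ≤ (1 / 2) ^ k := pow_le_pow_left₀ (by positivity) (one_div_le_one_div_of_le two_pos hd) k

theorem bernstein_term_le {d N Q s R t : ℝ} (k : ℕ) (hd : 2 ≤ d) (hN : 0 < N) (hQ : 0 < Q)
    (hs : 0 < s) (hR : 0 ≤ R) (ht0 : 0 ≤ t) (ht : t ^ 2 = 4 * (k + 1) * (N * Q * s ^ 2) * log d)
    (hRt : R * t ≤ 3 * N * s ^ 2) :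
    2 * d * exp (-(t ^ 2 / 2) / (N * Q * s ^ 2 + Q * R * t / 3)) ≤ 2 * (1 / 2) ^ k := by
  have hv : 0 < N * Q * s ^ 2 := by positivity
  have hexponent : -(t ^ 2 / 2) / (N * Q * s ^ 2 + Q * R * t / 3) ≤ -((k + 1) * log d) := by
    refine (bernstein_exponent_le hv (by positivity) ?_).trans_eq ?_
    · nlinarith [mul_le_mul_of_nonneg_left hRt hQ.le]
    · rw [ht]; field_simp
  rw [mul_assoc]
  gcongr
  exact (mul_le_mul_of_nonneg_left (exp_le_exp.2 hexponent) (by linarith)).trans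
    (mul_exp_neg_succ_mul_log_le hd k)

theorem mul_le_mul_sqrt_of_mul_sqrt_le {N Q L s R c : ℝ} (hN : 0 ≤ N) (hQL : 0 ≤ Q * L)
    (h : R * √(Q * L) ≤ c * (s * √N)) : Q * L * R ≤ c * (s * √(N * Q * L)) :=
  calc Q * L * R = √(Q * L) * √(Q * L) * R := by rw [mul_self_sqrt hQL]
    _ = √(Q * L) * (R * √(Q * L)) := by ring
    _ ≤ √(Q * L) * (c * (s * √N)) := mul_le_mul_of_nonneg_left h (sqrt_nonneg _)
    _ = c * (s * √(N * Q * L)) := by rw [mul_assoc N, sqrt_mul hN]; ring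

theorem mul_sqrt_le_of_mul_sqrt_le {N Q L s R c : ℝ} (hN : 0 ≤ N) (hs : 0 ≤ s)
    (h : R * √(Q * L) ≤ c * (s * √N)) : R * (s * √(N * Q * L)) ≤ c * N * s ^ 2 :=
  calc R * (s * √(N * Q * L)) = R * √(Q * L) * (s * √N) := by
        rw [mul_assoc N, sqrt_mul hN]; ring
    _ ≤ c * (s * √N) * (s * √N) := mul_le_mul_of_nonneg_right h (by positivity)
    _ = c * (√N * √N) * s ^ 2 := by ring
    _ = c * N * s ^ 2 := by rw [mul_self_sqrt hN]

theorem measure_le_of_bernstein_tail {Ω E : Type*} [MeasurableSpace Ω] [SeminormedAddCommGroup E]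
    (μ : Measure Ω) {n q : ℕ} (k : ℕ) (Ξ : Fin n → Ω → E) {d R s m : ℝ} (hd : 2 ≤ d)
    (hn : 0 < n) (hq : 0 < q) (hR : 0 ≤ R) (hs : 0 < s) (hΞ : ∀ i ω, ‖Ξ i ω‖ ≤ R)
    (htail : ∀ t : ℝ, 0 ≤ t →
      (μ {ω | 6 * t ≤ ‖∑ i, Ξ i ω‖}).toReal ≤ m +
        (μ {ω | t ≤ ‖∑ i ∈ univ.filter (fun i : Fin n => q * (n / q) ≤ i.val), Ξ i ω‖}).toReal +
        2 * d * exp (-(t ^ 2 / 2) / ((n : ℝ) * q * s ^ 2 + q * R * t / 3)))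
    (h₁ : R * √(q * log d) ≤ log 2 * (s * √n))
    (h₂ : R * √(q * log d) ≤ 3 / (2 * √(k + 1)) * (s * √n)) :
    (μ {ω | 12 * √(k + 1) * (s * √(n * q * log d)) ≤ ‖∑ i, Ξ i ω‖}).toReal ≤
      m + 2 * (1 / 2) ^ k := by
  have hL0 : 0 < log d := log_pos (by linarith)
  have hnq : (0 : ℝ) < n * q := by positivity
  set x := s * √(n * q * log d) with hx
  have hx0 : 0 < x := mul_pos hs (sqrt_pos.2 (mul_pos hnq hL0))
  have hk1 : (1 : ℝ) ≤ √(k + 1) := one_le_sqrt.2 (by linarith [k.cast_nonneg (α := ℝ)])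
  set t := 2 * √(k + 1) * x with ht
  have hqR : q * R < t := by
    have hqLR := mul_le_mul_sqrt_of_mul_sqrt_le (n.cast_nonneg (α := ℝ))
      (by positivity) h₁
    have hlog : log 2 ≤ log d := log_le_log two_pos hd
    have hqRx : q * R ≤ x := le_of_mul_le_mul_left (by nlinarith) hL0
    nlinarith
  have hRt : R * t ≤ 3 * n * s ^ 2 := by
    have hRx := mul_sqrt_le_of_mul_sqrt_le (n.cast_nonneg (α := ℝ)) hs.le h₂
    calc R * t = 2 * √(k + 1) * (R * x) := by ring
      _ ≤ 2 * √(k + 1) * (3 / (2 * √(k + 1)) * n * s ^ 2) := by gcongr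
      _ = 3 * n * s ^ 2 := by field_simp
  have ht2 : t ^ 2 = 4 * (k + 1) * (n * q * s ^ 2) * log d := by
    simp only [ht, hx, mul_pow]
    rw [sq_sqrt (by positivity), sq_sqrt (mul_pos hnq hL0).le]
    ring
  have hremainder := measure_remainder_block_eq_zero μ hq Ξ hR hΞ hqR
  calc (μ {ω | 12 * √(k + 1) * x ≤ ‖∑ i, Ξ i ω‖}).toReal
      = (μ {ω | 6 * t ≤ ‖∑ i, Ξ i ω‖}).toReal := by rw [ht]; ring_nf
    _ ≤ m + 2 * d * exp (-(t ^ 2 / 2) / ((n : ℝ) * q * s ^ 2 + q * R * t / 3)) := by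
      simpa [hremainder] using htail t (by positivity)
    _ ≤ m + 2 * (1 / 2) ^ k := add_le_add_right
      (bernstein_term_le k hd (by positivity) (by positivity) hs hR (by positivity) ht2 hRt) m

end

theorem beta_mixing_matrix_rate_general
    (Ω : ℕ → Type*) [∀ n, MeasurableSpace (Ω n)]
    (μ : ∀ n, Measure (Ω n))
    (d₁ d₂ : ℕ → ℕ) (hd : ∀ n, 2 ≤ d₁ n + d₂ n)
    (Ξ : ∀ n, Fin n → Ω n → Matrix (Fin (d₁ n)) (Fin (d₂ n)) ℝ)
    (R s β : ℕ → ℝ) (q : ℕ → ℕ)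
    (hR0 : ∀ n, 0 ≤ R n) (hspos : ∀ n, 0 < s n)
    (hq : ∀ᶠ n in atTop, 1 ≤ q n ∧ 2 * q n ≤ n)
    (hRbd : ∀ n i ω, ‖Ξ n i ω‖ ≤ R n)
    (htail : ∀ n, ∀ t : ℝ, 0 ≤ t →
      ((μ n) {ω | 6 * t ≤ ‖∑ i : Fin n, Ξ n i ω‖}).toReal ≤
        ((n : ℝ) / q n) * β n +
        ((μ n) {ω | t ≤ ‖∑ i ∈ Finset.univ.filter
            (fun i : Fin n => q n * (n / q n) ≤ i.val), Ξ n i ω‖}).toReal +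
        2 * ((d₁ n : ℝ) + d₂ n) *
          Real.exp (-(t ^ 2 / 2) / ((n : ℝ) * q n * s n ^ 2 + q n * R n * t / 3)))
    (hmix : Tendsto (fun n : ℕ => ((n : ℝ) / q n) * β n) atTop (nhds 0))
    (hsmall : (fun n : ℕ => R n * Real.sqrt ((q n : ℝ) * Real.log ((d₁ n : ℝ) + d₂ n)))
      =o[atTop] (fun n : ℕ => s n * Real.sqrt n)) :
    ∀ ε : ℝ, 0 < ε → ∃ C : ℝ, 0 < C ∧
      Filter.limsup (fun n : ℕ =>
          ((μ n) {ω | C * (s n * Real.sqrt ((n : ℝ) * q n * Real.log ((d₁ n : ℝ) + d₂ n))) ≤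
            ‖∑ i : Fin n, Ξ n i ω‖}).toReal) atTop ≤ ε := by
  intro ε hε
  obtain ⟨k, hk⟩ : ∃ k : ℕ, (1 / 2 : ℝ) ^ k < ε / 4 :=
    exists_pow_lt_of_lt_one (by positivity) (by norm_num)
  refine ⟨12 * √(k + 1), by positivity, limsup_le_of_le
    (isCoboundedUnder_le_of_le atTop fun _ => ENNReal.toReal_nonneg) ?_⟩
  have hc : (0 : ℝ) < 3 / (2 * √(k + 1)) := by positivity
  filter_upwards [hq, hsmall.def (Real.log_pos one_lt_two), hsmall.def hc,
    hmix.eventually_lt_const (half_pos hε)] with n ⟨hq1, hqn⟩ h₁ h₂ hm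
  rw [Real.norm_of_nonneg (mul_nonneg (hR0 n) (Real.sqrt_nonneg _)),
    Real.norm_of_nonneg (mul_nonneg (hspos n).le (Real.sqrt_nonneg _))] at h₁ h₂
  have hd' : (2 : ℝ) ≤ d₁ n + d₂ n := by exact_mod_cast hd n
  have := measure_le_of_bernstein_tail (μ n) k (Ξ n) hd' (by omega) hq1 (hR0 n) (hspos n)
    (hRbd n) (htail n) h₁ h₂
  linarith

/-- **Rate corollary of the β-mixing matrix exponential inequality.**
If `q = q(n) ≤ n/2` is chosen so that `(n/q)β(q) = o(1)` and
`R_n √(q log(d₁+d₂)) = o(s_n √n)`, then, given the Bernstein-type tail bound for β-mixing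
sequences (with remainder block `I_r` of fewer than `q` terms each bounded by `R_n`),
`‖Σ_{i=1}^n Ξ_{i,n}‖ = O_p(s_n √(n q log(d₁+d₂)))`. -/
theorem beta_mixing_matrix_rate
    (Ω : ℕ → Type*) [∀ n, MeasurableSpace (Ω n)]
    (μ : ∀ n, Measure (Ω n)) [∀ n, IsProbabilityMeasure (μ n)]
    (d₁ d₂ : ℕ → ℕ) (hd : ∀ n, 2 ≤ d₁ n + d₂ n)
    (Ξ : ∀ n, Fin n → Ω n → Matrix (Fin (d₁ n)) (Fin (d₂ n)) ℝ)
    (hmean : ∀ n i, (∫ ω, Ξ n i ω ∂(μ n)) = 0)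
    (R s β : ℕ → ℝ) (q : ℕ → ℕ)
    (hR0 : ∀ n, 0 ≤ R n) (hspos : ∀ n, 0 < s n) (hβ0 : ∀ n, 0 ≤ β n)
    (hq : ∀ᶠ n in atTop, 1 ≤ q n ∧ 2 * q n ≤ n)
    (hRbd : ∀ n i ω, ‖Ξ n i ω‖ ≤ R n)
    (htail : ∀ n, ∀ t : ℝ, 0 ≤ t →
      ((μ n) {ω | 6 * t ≤ ‖∑ i : Fin n, Ξ n i ω‖}).toReal ≤
        ((n : ℝ) / q n) * β n +
        ((μ n) {ω | t ≤ ‖∑ i ∈ Finset.univ.filter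
            (fun i : Fin n => q n * (n / q n) ≤ i.val), Ξ n i ω‖}).toReal +
        2 * ((d₁ n : ℝ) + d₂ n) *
          Real.exp (-(t ^ 2 / 2) / ((n : ℝ) * q n * s n ^ 2 + q n * R n * t / 3)))
    (hmix : Tendsto (fun n : ℕ => ((n : ℝ) / q n) * β n) atTop (nhds 0))
    (hsmall : (fun n : ℕ => R n * Real.sqrt ((q n : ℝ) * Real.log ((d₁ n : ℝ) + d₂ n)))
      =o[atTop] (fun n : ℕ => s n * Real.sqrt n)) :
    ∀ ε : ℝ, 0 < ε → ∃ C : ℝ, 0 < C ∧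
      Filter.limsup (fun n : ℕ =>
          ((μ n) {ω | C * (s n * Real.sqrt ((n : ℝ) * q n * Real.log ((d₁ n : ℝ) + d₂ n))) ≤
            ‖∑ i : Fin n, Ξ n i ω‖}).toReal) atTop ≤ ε :=
  beta_mixing_matrix_rate_general Ω μ d₁ d₂ hd Ξ R s β q hR0 hspos hq hRbd htail hmix hsmall
end
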